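/- Let R > 0 and fix either sign ±. For every f ∈ C^∞([−R,R]) one has the commutator relation D_±(L_± f) − L_±(D_± f) = −D_± f pointwise on [−R,R]; more generally, for every j ∈ ℕ, D_±^j(L_± f) − L_±(D_±^j f) = −j D_±^j f pointwise on [−R,R]. -/

import Mathlib

open Real

/-- The height function `h(y) = √(2 + y²) − 2`. -/
noncomputable def hfun (y : ℝ) : ℝ := Real.sqrt (2 + y ^ 2) - 2

/-- The vector field `D_± f(y) = f'(y)/(1 ± h'(y))`; the sign is encoded by `σ ∈ {1, −1}`. -/
noncomputable def Dop (σ : ℝ) (f : ℝ → ℝ) : ℝ → ℝ :=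
  fun y => deriv f y / (1 + σ * deriv hfun y)

/-- The vector field `L_± f(y) = −((y ± h(y))/(1 ± h'(y))) f'(y)`. -/
noncomputable def Lop (σ : ℝ) (f : ℝ → ℝ) : ℝ → ℝ :=
  fun y => -((y + σ * hfun y) / (1 + σ * deriv hfun y)) * deriv f y

/-!
With `a = 1 ± h'` and `b = y ± h` one has `D = a⁻¹ ∂` and `L = -(b/a) ∂` where `b' = a`.
The Lie bracket of `c ∂` and `d ∂` is `(c d' - d c') ∂`; for `c = a⁻¹` and `d = -b c` this
coefficient is `-b' c² = -c`, so `[D, L] = -D`. Since `D` is linear, induction on `j` then gives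
`[D^j, L] = -j D^j`.
-/

noncomputable def Dfield (a f : ℝ → ℝ) : ℝ → ℝ :=
  fun y => deriv f y / a y

noncomputable def Lfield (a b f : ℝ → ℝ) : ℝ → ℝ :=
  fun y => -(b y / a y) * deriv f y

open scoped ContDiff

section Fields

variable {a b f g k : ℝ → ℝ}

theorem Dfield_Lfield_sub_Lfield_Dfield {y : ℝ} (ha : DifferentiableAt ℝ a y) (ha0 : a y ≠ 0)
    (hb : HasDerivAt b (a y) y) (hf : DifferentiableAt ℝ (deriv f) y) :
    Dfield a (Lfield a b f) y - Lfield a b (Dfield a f) y = -Dfield a f y := by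
  have hL : HasDerivAt (Lfield a b f)
      (-((a y * a y - b y * deriv a y) / a y ^ 2) * deriv f y
        + -(b y / a y) * deriv (deriv f) y) y :=
    (hb.div ha.hasDerivAt ha0).neg.mul hf.hasDerivAt
  have hD : HasDerivAt (Dfield a f)
      ((deriv (deriv f) y * a y - deriv f y * deriv a y) / a y ^ 2) y :=
    hf.hasDerivAt.div ha.hasDerivAt ha0
  simp only [Dfield, Lfield, hL.deriv, hD.deriv]
  field_simp
  ring

theorem Dfield_sub_const_mul {y c : ℝ} (hg : DifferentiableAt ℝ g y)
    (hk : DifferentiableAt ℝ k y) :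
    Dfield a (fun z => g z - c * k z) y = Dfield a g y - c * Dfield a k y := by
  simp only [Dfield, deriv_fun_sub hg (hk.const_mul c), deriv_const_mul c hk]
  ring

theorem differentiableAt_Lfield {y : ℝ} (ha : DifferentiableAt ℝ a y) (ha0 : a y ≠ 0)
    (hb : DifferentiableAt ℝ b y) (hf : DifferentiableAt ℝ (deriv f) y) :
    DifferentiableAt ℝ (Lfield a b f) y :=
  (hb.div ha ha0).neg.mul hf

theorem contDiff_iterate_Dfield (ha : ContDiff ℝ ∞ a) (ha0 : ∀ y, a y ≠ 0)
    (hf : ContDiff ℝ ∞ f) (j : ℕ) : ContDiff ℝ ∞ ((Dfield a)^[j] f) := by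
  induction j with
  | zero => exact hf
  | succ j ih =>
    rw [Function.iterate_succ_apply']
    exact (contDiff_infty_iff_deriv.mp ih).2.div ha ha0

theorem iterate_Dfield_Lfield_sub (ha : ContDiff ℝ ∞ a) (ha0 : ∀ y, a y ≠ 0)
    (hb : ∀ y, HasDerivAt b (a y) y) (hf : ContDiff ℝ ∞ f) (j : ℕ) (y : ℝ) :
    (Dfield a)^[j] (Lfield a b f) y - Lfield a b ((Dfield a)^[j] f) y
      = -(j : ℝ) * (Dfield a)^[j] f y := by
  induction j generalizing y with
  | zero => simp
  | succ j ih =>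
    set g := (Dfield a)^[j] f
    have hg : ContDiff ℝ ∞ g := contDiff_iterate_Dfield ha ha0 hf j
    have hg' : Differentiable ℝ (deriv g) :=
      (contDiff_infty_iff_deriv.mp hg).2.differentiable (by simp)
    have ha' : Differentiable ℝ a := ha.differentiable (by simp)
    have hDjL : (Dfield a)^[j] (Lfield a b f) = fun z => Lfield a b g z - j * g z :=
      funext fun z => by linarith [ih z]
    rw [Function.iterate_succ_apply', Function.iterate_succ_apply', hDjL,
      Dfield_sub_const_mul
        (differentiableAt_Lfield (ha' y) (ha0 y) (hb y).differentiableAt (hg' y))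
        (hg.differentiable (by simp) y)]
    push_cast
    linear_combination Dfield_Lfield_sub_Lfield_Dfield (ha' y) (ha0 y) (hb y) (hg' y)

end Fields

theorem hasDerivAt_hfun (y : ℝ) : HasDerivAt hfun (y / √(2 + y ^ 2)) y := by
  have h2y : 2 + y ^ 2 ≠ 0 := by positivity
  have hsqrt := ((hasDerivAt_pow 2 y).const_add 2).sqrt h2y
  refine (hsqrt.sub_const 2).congr_deriv ?_
  field_simp
  ring

theorem deriv_hfun : deriv hfun = fun y => y / √(2 + y ^ 2) :=
  funext fun y => (hasDerivAt_hfun y).deriv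

theorem contDiff_deriv_hfun : ContDiff ℝ ∞ (deriv hfun) := by
  rw [deriv_hfun]
  exact contDiff_id.div ((contDiff_const.add (contDiff_id.pow 2)).sqrt
    fun y => by positivity) fun y => by positivity

theorem abs_deriv_hfun_lt_one (y : ℝ) : |deriv hfun y| < 1 := by
  have hy : |y| < √(2 + y ^ 2) := by
    rw [← Real.sqrt_sq_eq_abs]
    exact Real.sqrt_lt_sqrt (sq_nonneg y) (by linarith)
  rw [deriv_hfun, abs_div, abs_of_pos (by positivity : 0 < √(2 + y ^ 2))]
  exact (div_lt_one (by positivity)).mpr hy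

theorem one_add_mul_deriv_hfun_pos {σ : ℝ} (hσ : |σ| ≤ 1) (y : ℝ) :
    0 < 1 + σ * deriv hfun y := by
  have : |σ * deriv hfun y| < 1 := by
    rw [abs_mul]
    nlinarith [abs_nonneg σ, abs_nonneg (deriv hfun y), abs_deriv_hfun_lt_one y]
  linarith [neg_abs_le (σ * deriv hfun y)]

theorem hasDerivAt_add_mul_hfun (σ y : ℝ) :
    HasDerivAt (fun y => y + σ * hfun y) (1 + σ * deriv hfun y) y :=
  (hasDerivAt_id y).add ((hasDerivAt_hfun y).const_mul σ) |>.congr_deriv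
    (by rw [(hasDerivAt_hfun y).deriv])

theorem commutator_relation_general (R : ℝ) (σ : ℝ) (hσ : σ = 1 ∨ σ = -1)
    (f : ℝ → ℝ) (hf : ContDiff ℝ (⊤ : ℕ∞) f) :
    (∀ y ∈ Set.Icc (-R) R,
      Dop σ (Lop σ f) y - Lop σ (Dop σ f) y = -(Dop σ f y)) ∧
    ∀ (j : ℕ), ∀ y ∈ Set.Icc (-R) R,
      (Dop σ)^[j] (Lop σ f) y - Lop σ ((Dop σ)^[j] f) y = -(j : ℝ) * (Dop σ)^[j] f y := by
  have ha : ContDiff ℝ ∞ (fun y => 1 + σ * deriv hfun y) :=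
    contDiff_const.add (contDiff_const.mul contDiff_deriv_hfun)
  have ha0 (y : ℝ) : 1 + σ * deriv hfun y ≠ 0 :=
    (one_add_mul_deriv_hfun_pos (by rcases hσ with rfl | rfl <;> norm_num) y).ne'
  have hf' : Differentiable ℝ (deriv f) :=
    (contDiff_infty_iff_deriv.mp hf).2.differentiable (by simp)
  exact ⟨fun y _ => Dfield_Lfield_sub_Lfield_Dfield (ha.differentiable (by simp) y) (ha0 y)
      (hasDerivAt_add_mul_hfun σ y) (hf' y),
    fun j y _ => iterate_Dfield_Lfield_sub ha ha0 (hasDerivAt_add_mul_hfun σ) hf j y⟩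

theorem commutator_relation (R : ℝ) (hR : 0 < R) (σ : ℝ) (hσ : σ = 1 ∨ σ = -1)
    (f : ℝ → ℝ) (hf : ContDiff ℝ (⊤ : ℕ∞) f) :
    (∀ y ∈ Set.Icc (-R) R,
      Dop σ (Lop σ f) y - Lop σ (Dop σ f) y = -(Dop σ f y)) ∧
    ∀ (j : ℕ), ∀ y ∈ Set.Icc (-R) R,
      (Dop σ)^[j] (Lop σ f) y - Lop σ ((Dop σ)^[j] f) y = -(j : ℝ) * (Dop σ)^[j] f y :=
  commutator_relation_general R σ hσ f hf
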